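/- Parseval-type equality: let f : ℝ → ℂ be 2π-periodic and Lebesgue integrable on [−π, π], and let g : ℝ → ℝ be 2π-periodic with bounded variation. Then ∫_{−π}^{π} f(t) g(t) dt = lim_{n→∞} (1/(2π)) Σ_{k=−n}^{n} (1 − |k|/(n+1)) f̂(k) ĝ(−k), where f̂(k) = ∫_{−π}^{π} f(t) e^{−ikt} dt and ĝ(k) = ∫_{−π}^{π} g(t) e^{−ikt} dt (note ĝ(−k) is the complex conjugate of ĝ(k) since g is real-valued). -/

import Mathlib

/-!
Let `σₙg(t) = (2π)⁻¹ ∫ Fₙ(u) g(t + u) du` be the Fejér means of `g`, where `Fₙ` is the Fejér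
kernel. Expanding `Fₙ` into its trigonometric sum and exchanging the finite sum with the integrals
turns the `n`-th Cesàro-weighted sum into `∫ f · σₙg`. The kernels `Fₙ / 2π` are nonnegative, have
integral one and tend to zero uniformly away from `0`, so `σₙg(t) → g(t)` wherever `g` is
continuous, which is almost everywhere since `g` has bounded variation; moreover
`|σₙg| ≤ sup |g| < ∞`. Dominated convergence against `f ∈ L¹` concludes.
-/

open MeasureTheory Real Filter

/-- The variation of a `2π`-periodic function over a period. -/
noncomputable def periodVariation (g : ℝ → ℝ) : ENNReal :=
  ⨆ a : ℝ, eVariationOn g (Set.Icc a (a + 2 * π))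

open Finset Topology

/-- The Fejér kernel `∑_{|k| ≤ n} (1 - |k| / (n + 1)) e^{iku}` (see `ofReal_fejerKernel`), defined
by its closed form, which shows at once that it is nonnegative. -/
noncomputable def fejerKernel (n : ℕ) (u : ℝ) : ℝ :=
  ‖∑ j ∈ range (n + 1), Complex.exp (Complex.I * j * u)‖ ^ 2 / (n + 1)

lemma periodic_exp_I_int_mul (k : ℤ) :
    Function.Periodic (fun u : ℝ => Complex.exp (Complex.I * k * u)) (2 * π) := fun u => by
  dsimp only
  rw [show Complex.I * k * ((u + 2 * π : ℝ) : ℂ) = Complex.I * k * u + k * (2 * π * Complex.I) by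
      push_cast; ring,
    Complex.exp_add, Complex.exp_int_mul_two_pi_mul_I, mul_one]

lemma integral_exp_I_int_mul {k : ℤ} (hk : k ≠ 0) :
    ∫ u in -π..π, Complex.exp (Complex.I * k * u) = 0 := by
  have hc : Complex.I * k ≠ 0 := by simp [Complex.I_ne_zero, hk]
  have hper := periodic_exp_I_int_mul k (-π)
  simp only [show -π + 2 * π = π by ring] at hper
  rw [integral_exp_mul_complex hc, hper, sub_self, zero_div]

lemma card_filter_sub_eq (n : ℕ) {k : ℤ} (hk : k ∈ Icc (-(n : ℤ)) n) :
    #{p ∈ range (n + 1) ×ˢ range (n + 1) | (p.1 : ℤ) - p.2 = k} = n + 1 - k.natAbs := by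
  rw [mem_Icc] at hk
  have : {p ∈ range (n + 1) ×ˢ range (n + 1) | (p.1 : ℤ) - p.2 = k} =
      (range (n + 1 - k.natAbs)).image fun l => (l + k.toNat, l + (-k).toNat) := by
    ext ⟨a, b⟩
    simp only [mem_filter, mem_product, mem_range, mem_image, Prod.mk.injEq]
    constructor
    · rintro ⟨⟨ha, hb⟩, hab⟩
      exact ⟨min a b, by omega, by omega, by omega⟩
    · rintro ⟨l, hl, rfl, rfl⟩
      omega
  rw [this, card_image_of_injective _ fun x y h => by simp only [Prod.mk.injEq] at h; omega,
    card_range]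

lemma norm_sum_exp_I_mul_sq (n : ℕ) (u : ℝ) :
    ((‖∑ j ∈ range (n + 1), Complex.exp (Complex.I * j * u)‖ ^ 2 : ℝ) : ℂ) =
      ∑ k ∈ Icc (-(n : ℤ)) n, ((n + 1 - k.natAbs : ℕ) : ℂ) * Complex.exp (Complex.I * k * u) := by
  have hsub : ∀ p ∈ range (n + 1) ×ˢ range (n + 1), (p.1 : ℤ) - p.2 ∈ Icc (-(n : ℤ)) n :=
    fun p hp => by simp only [mem_product, mem_range] at hp; simp only [mem_Icc]; omega
  rw [Complex.ofReal_pow, ← Complex.mul_conj', map_sum, sum_mul_sum, ← sum_product',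
    ← sum_fiberwise_of_maps_to hsub]
  refine sum_congr rfl fun k hk => ?_
  rw [← card_filter_sub_eq n hk, ← nsmul_eq_mul, ← sum_const]
  refine sum_congr rfl fun p hp => ?_
  rw [← Complex.exp_conj, ← Complex.exp_add, ← (mem_filter.mp hp).2]
  congr 1
  simp only [map_mul, Complex.conj_I, map_natCast, neg_mul, Complex.conj_ofReal, Int.cast_sub,
    Int.cast_natCast]
  ring

lemma ofReal_fejerKernel (n : ℕ) (u : ℝ) :
    (fejerKernel n u : ℂ) = ∑ k ∈ Icc (-(n : ℤ)) n,
      ((1 - |(k : ℝ)| / ((n : ℝ) + 1) : ℝ) : ℂ) * Complex.exp (Complex.I * k * u) := by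
  have hn : (n : ℂ) + 1 ≠ 0 := by exact_mod_cast n.succ_ne_zero
  rw [fejerKernel, Complex.ofReal_div, norm_sum_exp_I_mul_sq, sum_div]
  refine sum_congr rfl fun k hk => ?_
  have hkn : k.natAbs ≤ n + 1 := by rw [mem_Icc] at hk; omega
  rw [← Int.cast_abs, ← Nat.cast_natAbs]
  push_cast [Nat.cast_sub hkn]
  field_simp

lemma fejerKernel_nonneg (n : ℕ) (u : ℝ) : 0 ≤ fejerKernel n u := by
  unfold fejerKernel
  positivity

@[fun_prop]
lemma continuous_fejerKernel (n : ℕ) : Continuous (fejerKernel n) := by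
  unfold fejerKernel
  fun_prop

lemma fejerKernel_periodic (n : ℕ) : Function.Periodic (fejerKernel n) (2 * π) := fun u => by
  have (j : ℕ) :
      Complex.exp (Complex.I * j * ↑(u + 2 * π)) = Complex.exp (Complex.I * j * u) := by
    exact_mod_cast periodic_exp_I_int_mul j u
  simp only [fejerKernel, this]

lemma integral_fejerKernel (n : ℕ) : ∫ u in -π..π, fejerKernel n u = 2 * π := by
  apply Complex.ofReal_injective
  rw [← intervalIntegral.integral_ofReal]
  simp_rw [ofReal_fejerKernel]
  rw [intervalIntegral.integral_finsetSum fun k _ =>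
      (by fun_prop : Continuous _).intervalIntegrable _ _,
    sum_eq_single_of_mem 0 (by simp) fun k _ hk => by
      rw [intervalIntegral.integral_const_mul, integral_exp_I_int_mul hk, mul_zero]]
  simp only [Int.cast_zero, abs_zero, zero_div, sub_zero, Complex.ofReal_one, mul_zero, zero_mul,
    Complex.exp_zero, mul_one, intervalIntegral.integral_const, sub_neg_eq_add, Complex.real_smul,
    Complex.ofReal_add, Complex.ofReal_mul, Complex.ofReal_ofNat]
  ring

lemma fejerKernel_le {n : ℕ} {δ u : ℝ} (hδ : 0 < δ) (hδu : δ ≤ |u|) (hu : |u| ≤ π) :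
    fejerKernel n u ≤ 1 / (Real.sin (δ / 2) ^ 2 * (n + 1)) := by
  set z := Complex.exp (Complex.I * u)
  have hsin : 0 < Real.sin (δ / 2) :=
    Real.sin_pos_of_pos_of_lt_pi (by positivity) (by linarith [hδu.trans hu])
  have hden : 2 * Real.sin (δ / 2) ≤ ‖z - 1‖ := by
    have hmono : Real.sin (δ / 2) ≤ Real.sin (|u| / 2) :=
      Real.sin_le_sin_of_le_of_le_pi_div_two (by linarith) (by linarith) (by linarith)
    have habs : Real.sin (|u| / 2) ≤ |Real.sin (u / 2)| := by
      rcases abs_cases u with ⟨h, -⟩ | ⟨h, -⟩ <;> rw [h]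
      · exact le_abs_self _
      · rw [neg_div, Real.sin_neg]; exact neg_le_abs _
    rw [Complex.norm_exp_I_mul_ofReal_sub_one, norm_mul, Real.norm_two, Real.norm_eq_abs]
    linarith
  have hz : z ≠ 1 := fun h => by
    rw [h, sub_self, norm_zero] at hden; linarith
  have hnum : ‖z ^ (n + 1) - 1‖ ≤ 2 := by
    simpa [z, Complex.norm_exp_I_mul_ofReal, one_add_one_eq_two] using
      norm_sub_le (z ^ (n + 1)) 1
  have hgeom : ∑ j ∈ range (n + 1), Complex.exp (Complex.I * j * u) =
      (z ^ (n + 1) - 1) / (z - 1) := by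
    rw [← geom_sum_eq hz]
    refine sum_congr rfl fun j _ => ?_
    rw [← Complex.exp_nat_mul]
    ring_nf
  have hD : ‖(z ^ (n + 1) - 1) / (z - 1)‖ ≤ 1 / Real.sin (δ / 2) := by
    rw [norm_div, div_le_div_iff₀ (by linarith) hsin]
    nlinarith
  rw [fejerKernel, hgeom, div_le_div_iff₀ (by positivity) (by positivity)]
  calc _ ≤ (1 / Real.sin (δ / 2)) ^ 2 * (Real.sin (δ / 2) ^ 2 * (n + 1)) := by gcongr
    _ = 1 * (n + 1) := by field_simp

lemma tendstoUniformlyOn_fejerKernel {δ : ℝ} (hδ : 0 < δ) :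
    TendstoUniformlyOn fejerKernel 0 atTop {u | δ ≤ |u| ∧ |u| ≤ π} := by
  have hbound : Tendsto (fun n : ℕ => 1 / (Real.sin (δ / 2) ^ 2 * (n + 1))) atTop (𝓝 0) := by
    simpa [one_div, mul_inv, mul_comm] using
      (tendsto_one_div_add_atTop_nhds_zero_nat (𝕜 := ℝ)).const_mul (Real.sin (δ / 2) ^ 2)⁻¹
  rw [Metric.tendstoUniformlyOn_iff]
  intro ε hε
  filter_upwards [hbound.eventually (gt_mem_nhds hε)] with n hn u ⟨hδu, hu⟩
  rw [Pi.zero_apply, dist_zero_left, Real.norm_of_nonneg (fejerKernel_nonneg n u)]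
  exact (fejerKernel_le hδ hδu hu).trans_lt hn

theorem tendsto_integral_fejerKernel_mul {h : ℝ → ℝ} (hint : IntervalIntegrable h volume (-π) π)
    (hc : ContinuousAt h 0) :
    Tendsto (fun n : ℕ => (2 * π)⁻¹ * ∫ u in -π..π, fejerKernel n u * h u) atTop (𝓝 (h 0)) := by
  have hπ : -π ≤ π := by linarith [pi_pos]
  simp_rw [intervalIntegral.integral_of_le hπ, ← integral_const_mul, ← mul_assoc]
  refine tendsto_setIntegral_peak_smul_of_integrableOn_of_tendsto measurableSet_Ioc
    measurableSet_Ioc subset_rfl self_mem_nhdsWithin measure_Ioc_lt_top.ne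
    (Eventually.of_forall fun n u _ => by have := fejerKernel_nonneg n u; positivity)
    (fun U hU h0U => ?_) (tendsto_const_nhds.congr fun n => ?_)
    (Eventually.of_forall fun n => by fun_prop) hint.1 (hc.tendsto.mono_left nhdsWithin_le_nhds)
  · obtain ⟨δ, hδ, hball⟩ := Metric.isOpen_iff.mp hU 0 h0U
    have hsub : Set.Ioc (-π) π \ U ⊆ {u | δ ≤ |u| ∧ |u| ≤ π} := fun u ⟨hu, huU⟩ =>
      ⟨by simpa using mt (@hball u) huU, abs_le.mpr ⟨hu.1.le, hu.2⟩⟩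
    simpa [Function.comp_def, Pi.zero_def] using
      ((uniformContinuous_mul_left' (2 * π)⁻¹).comp_tendstoUniformlyOn
        (tendstoUniformlyOn_fejerKernel hδ)).mono hsub
  · rw [integral_const_mul, ← intervalIntegral.integral_of_le hπ, integral_fejerKernel]
    field_simp [pi_pos.ne']

section BoundedVariation

open Set

theorem locallyBoundedVariationOn_univ_of_eVariationOn_Icc_add_ne_top {E : Type*}
    [PseudoEMetricSpace E] {f : ℝ → E} {T : ℝ} (hT : 0 < T)
    (hf : ∀ a, eVariationOn f (Icc a (a + T)) ≠ ⊤) : LocallyBoundedVariationOn f univ := by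
  have hN : ∀ (N : ℕ) (a : ℝ), eVariationOn f (Icc a (a + N * T)) ≠ ⊤ := by
    intro N a
    induction N with
    | zero => simp [eVariationOn.subsingleton]
    | succ N ih =>
      have hsplit := eVariationOn.Icc_add_Icc f (s := univ) (a := a) (b := a + N * T)
        (c := a + (N + 1 : ℕ) * T) (le_add_of_nonneg_right (by positivity))
        (by push_cast; linarith) (mem_univ _)
      simp only [Set.univ_inter, show a + ((N + 1 : ℕ) : ℝ) * T = a + N * T + T by push_cast; ring]
        at hsplit ⊢
      rw [← hsplit]
      exact ENNReal.add_ne_top.mpr ⟨ih, hf _⟩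
  intro a b _ _
  obtain ⟨N, hbN⟩ := exists_nat_ge ((b - a) / T)
  rw [div_le_iff₀ hT] at hbN
  refine ne_top_of_le_ne_top (hN N a) (eVariationOn.mono f fun x hx => ⟨hx.2.1, ?_⟩)
  linarith [hx.2.2]

theorem LocallyBoundedVariationOn.intervalIntegrable {f : ℝ → ℝ}
    (hf : LocallyBoundedVariationOn f univ) (a b : ℝ) : IntervalIntegrable f volume a b := by
  obtain ⟨p, q, hp, hq, rfl⟩ := hf.exists_monotoneOn_sub_monotoneOn
  exact ((monotoneOn_univ.mp hp).intervalIntegrable).sub (monotoneOn_univ.mp hq).intervalIntegrable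

theorem Function.Periodic.exists_norm_le_of_locallyBoundedVariationOn {E : Type*}
    [SeminormedAddCommGroup E] {f : ℝ → E} {T : ℝ} (hper : Function.Periodic f T) (hT : 0 < T)
    (hf : LocallyBoundedVariationOn f univ) : ∃ M, ∀ x, ‖f x‖ ≤ M := by
  have hbv : BoundedVariationOn f (univ ∩ Icc 0 T) := hf 0 T trivial trivial
  refine ⟨‖f 0‖ + (eVariationOn f (univ ∩ Icc 0 T)).toReal, fun x => ?_⟩
  obtain ⟨y, hy, hxy⟩ := hper.exists_mem_Ico₀ hT x
  have hdist := hbv.dist_le ⟨trivial, hy.1, hy.2.le⟩ ⟨trivial, le_rfl, hT.le⟩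
  rw [hxy]
  linarith [norm_le_norm_add_norm_sub' (f y) (f 0), dist_eq_norm (f y) (f 0)]

end BoundedVariation

/-- The coefficient `f̂(k) = ∫_{-π}^{π} f(t) e^{-ikt} dt`, without the factor `1 / (2π)` of
Mathlib's `fourierCoeff`. -/
noncomputable def fourierHat (f : ℝ → ℂ) (k : ℤ) : ℂ :=
  ∫ t in -π..π, f t * Complex.exp (-Complex.I * k * t)

lemma integral_mul_sum_exp_eq_sum_fourierHat {f : ℝ → ℂ}
    (hf : IntervalIntegrable f volume (-π) π) (s : Finset ℤ) (a : ℤ → ℂ) :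
    ∫ t in -π..π, f t * ∑ k ∈ s, a k * Complex.exp (-Complex.I * k * t) =
      ∑ k ∈ s, a k * fourierHat f k := by
  simp_rw [mul_sum, fourierHat, ← intervalIntegral.integral_const_mul]
  rw [intervalIntegral.integral_finsetSum fun k _ =>
    hf.mul_continuousOn (Continuous.continuousOn (by fun_prop))]
  exact sum_congr rfl fun k _ => intervalIntegral.integral_congr fun t _ => by ring

lemma sum_fourierHat_neg_mul_exp {g : ℝ → ℂ} (hg : IntervalIntegrable g volume (-π) π)
    (n : ℕ) (t : ℝ) :
    ∑ k ∈ Icc (-(n : ℤ)) n, ((1 - |(k : ℝ)| / ((n : ℝ) + 1) : ℝ) : ℂ) * fourierHat g (-k) *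
        Complex.exp (-Complex.I * k * t) =
      ∫ s in -π..π, g s * fejerKernel n (s - t) := by
  have hterm : ∀ k : ℤ, ((1 - |(k : ℝ)| / ((n : ℝ) + 1) : ℝ) : ℂ) * fourierHat g (-k) *
      Complex.exp (-Complex.I * k * t) = ∫ s in -π..π, g s *
        (((1 - |(k : ℝ)| / ((n : ℝ) + 1) : ℝ) : ℂ) * Complex.exp (Complex.I * k * ↑(s - t))) := by
    intro k
    rw [fourierHat, ← intervalIntegral.integral_const_mul, ← intervalIntegral.integral_mul_const]
    refine intervalIntegral.integral_congr fun s _ => ?_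
    rw [show Complex.exp (Complex.I * k * ↑(s - t)) =
        Complex.exp (-Complex.I * ↑(-k) * s) * Complex.exp (-Complex.I * k * t) by
      rw [← Complex.exp_add]; push_cast; ring_nf]
    ring
  rw [sum_congr rfl fun k _ => hterm k, ← intervalIntegral.integral_finsetSum fun k _ =>
    hg.mul_continuousOn (by fun_prop : Continuous _).continuousOn]
  simp_rw [← mul_sum, ← ofReal_fejerKernel]

theorem Function.Periodic.intervalIntegral_comp_add_left {E : Type*} [NormedAddCommGroup E]
    [NormedSpace ℝ E] {φ : ℝ → E} {T : ℝ} (hφ : Function.Periodic φ T) (t a : ℝ) :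
    ∫ u in a..a + T, φ (t + u) = ∫ s in a..a + T, φ s := by
  rw [intervalIntegral.integral_comp_add_left, ← add_assoc, hφ.intervalIntegral_add_eq]

noncomputable def fejerMean (g : ℝ → ℝ) (n : ℕ) (t : ℝ) : ℝ :=
  (2 * π)⁻¹ * ∫ u in -π..π, fejerKernel n u * g (t + u)

section FejerMean

variable {g : ℝ → ℝ}

lemma ofReal_fejerMean (hper : Function.Periodic g (2 * π))
    (hint : IntervalIntegrable g volume (-π) π) (n : ℕ) (t : ℝ) :
    (fejerMean g n t : ℂ) = (2 * π)⁻¹ * ∑ k ∈ Icc (-(n : ℤ)) n,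
      ((1 - |(k : ℝ)| / ((n : ℝ) + 1) : ℝ) : ℂ) * fourierHat (fun s => (g s : ℂ)) (-k) *
        Complex.exp (-Complex.I * k * t) := by
  have hshift := (((fejerKernel_periodic n).sub_const t).mul hper).intervalIntegral_comp_add_left
    t (-π)
  simp only [show -π + 2 * π = π by ring, add_sub_cancel_left, Pi.mul_apply] at hshift
  rw [sum_fourierHat_neg_mul_exp (g := fun s => (g s : ℂ)) ⟨hint.1.ofReal, hint.2.ofReal⟩,
    fejerMean, hshift, Complex.ofReal_mul, ← intervalIntegral.integral_ofReal]
  push_cast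
  simp_rw [mul_comm]

lemma continuous_fejerMean (hper : Function.Periodic g (2 * π))
    (hint : IntervalIntegrable g volume (-π) π) (n : ℕ) : Continuous (fejerMean g n) := by
  have : fejerMean g n = fun t : ℝ => ((2 * π)⁻¹ * ∑ k ∈ Icc (-(n : ℤ)) n,
      ((1 - |(k : ℝ)| / ((n : ℝ) + 1) : ℝ) : ℂ) * fourierHat (fun s => (g s : ℂ)) (-k) *
        Complex.exp (-Complex.I * k * t)).re := by
    funext t
    rw [← ofReal_fejerMean hper hint, Complex.ofReal_re]
  rw [this]
  fun_prop

lemma tendsto_fejerMean (hper : Function.Periodic g (2 * π))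
    (hint : IntervalIntegrable g volume (-π) π) {t : ℝ} (hc : ContinuousAt g t) :
    Tendsto (fun n => fejerMean g n t) atTop (𝓝 (g t)) := by
  have hint' : IntervalIntegrable (fun u => g (t + u)) volume (-π) π := by
    have hperiod : IntervalIntegrable g volume (-π) (-π + 2 * π) := by
      rwa [show -π + 2 * π = π by ring]
    simpa using
      (hper.intervalIntegrable two_pi_pos.ne' hperiod (t - π) (t + π)).comp_add_left t
  have hc' : ContinuousAt (fun u => g (t + u)) 0 :=
    hc.comp_of_eq (continuous_const_add t).continuousAt (add_zero t)
  simpa [fejerMean] using tendsto_integral_fejerKernel_mul hint' hc'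

lemma abs_fejerMean_le {M : ℝ} (hM : ∀ x, |g x| ≤ M) (n : ℕ) (t : ℝ) :
    |fejerMean g n t| ≤ M := by
  have hint : ∫ u in -π..π, fejerKernel n u * M = 2 * π * M := by
    rw [intervalIntegral.integral_mul_const, integral_fejerKernel]
  have hle := intervalIntegral.norm_integral_le_of_norm_le (μ := volume)
    (f := fun u => fejerKernel n u * g (t + u)) (by linarith [pi_pos])
    (Eventually.of_forall fun u _ => by
      rw [norm_mul, Real.norm_of_nonneg (fejerKernel_nonneg n u), Real.norm_eq_abs]
      exact mul_le_mul_of_nonneg_left (hM (t + u)) (fejerKernel_nonneg n u))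
    ((continuous_fejerKernel n).intervalIntegrable (-π) π |>.mul_const M)
  rw [hint, Real.norm_eq_abs] at hle
  rw [fejerMean, abs_mul, abs_inv, abs_of_pos two_pi_pos]
  calc (2 * π)⁻¹ * |∫ u in -π..π, fejerKernel n u * g (t + u)| ≤ (2 * π)⁻¹ * (2 * π * M) := by
        gcongr
    _ = M := by field_simp [pi_pos.ne']

end FejerMean

theorem tendsto_integral_mul_of_norm_le_of_ae_tendsto {a b M : ℝ} {f G : ℝ → ℂ}
    {F : ℕ → ℝ → ℂ} (hf : IntervalIntegrable f volume a b)
    (hF : ∀ n, AEStronglyMeasurable (F n) volume) (hFM : ∀ n x, ‖F n x‖ ≤ M)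
    (hlim : ∀ᵐ x, Tendsto (fun n => F n x) atTop (𝓝 (G x))) :
    Tendsto (fun n => ∫ x in a..b, f x * F n x) atTop (𝓝 (∫ x in a..b, f x * G x)) :=
  intervalIntegral.tendsto_integral_filter_of_dominated_convergence (fun x => ‖f x‖ * M)
    (Eventually.of_forall fun n =>
      (intervalIntegrable_iff.mp hf).aestronglyMeasurable.mul (hF n).restrict)
    (Eventually.of_forall fun n => ae_of_all _ fun x _ => by
      rw [norm_mul]; exact mul_le_mul_of_nonneg_left (hFM n x) (norm_nonneg _))
    (hf.norm.mul_const M) (hlim.mono fun x hx _ => hx.const_mul (f x))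

theorem parseval_type_equality_general (f : ℝ → ℂ) (g : ℝ → ℝ)
    (hfint : IntervalIntegrable f volume (-π) π)
    (hgper : Function.Periodic g (2 * π))
    (hgbv : periodVariation g ≠ ⊤) :
    Tendsto (fun n : ℕ =>
        (1 / (2 * (π : ℂ))) * ∑ k ∈ Finset.Icc (-(n : ℤ)) (n : ℤ),
          ((1 - |(k : ℝ)| / ((n : ℝ) + 1) : ℝ) : ℂ) *
            (∫ t in (-π)..π, f t * Complex.exp (-Complex.I * (k : ℂ) * (t : ℂ))) *
            (∫ t in (-π)..π, (g t : ℂ) * Complex.exp (-Complex.I * ((-k : ℤ) : ℂ) * (t : ℂ))))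
      atTop (nhds (∫ t in (-π)..π, f t * (g t : ℂ))) := by
  have hbv : LocallyBoundedVariationOn g Set.univ :=
    locallyBoundedVariationOn_univ_of_eVariationOn_Icc_add_ne_top two_pi_pos fun a =>
      ne_top_of_le_ne_top hgbv (le_iSup (fun a => eVariationOn g (Set.Icc a (a + 2 * π))) a)
  have hgint := hbv.intervalIntegrable (-π) π
  obtain ⟨M, hM⟩ := hgper.exists_norm_le_of_locallyBoundedVariationOn two_pi_pos hbv
  have hmean (n : ℕ) : (1 / (2 * (π : ℂ))) * ∑ k ∈ Icc (-(n : ℤ)) n,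
      ((1 - |(k : ℝ)| / ((n : ℝ) + 1) : ℝ) : ℂ) * fourierHat f k *
        fourierHat (fun s => (g s : ℂ)) (-k) = ∫ t in -π..π, f t * (fejerMean g n t : ℂ) := by
    simp_rw [ofReal_fejerMean hgper hgint, mul_left_comm (f _),
      intervalIntegral.integral_const_mul, integral_mul_sum_exp_eq_sum_fourierHat hfint,
      mul_right_comm _ (fourierHat f _)]
    push_cast
    ring
  refine (tendsto_congr hmean).mpr (tendsto_integral_mul_of_norm_le_of_ae_tendsto (M := M) hfint
    (fun n => (Complex.continuous_ofReal.comp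
      (continuous_fejerMean hgper hgint n)).aestronglyMeasurable) (fun n t => ?_) ?_)
  · rw [Complex.norm_real, Real.norm_eq_abs]
    exact abs_fejerMean_le (fun x => Real.norm_eq_abs (g x) ▸ hM x) n t
  · filter_upwards [hbv.ae_differentiableAt] with t hdiff
    exact (Complex.continuous_ofReal.tendsto _).comp
      (tendsto_fejerMean hgper hgint hdiff.continuousAt)

/-- Parseval-type equality: for `f ∈ L¹(𝕋)` and `g` of bounded
variation, `∫ fg = lim_n (1/2π) Σ_{|k|≤n} (1 − |k|/(n+1)) f̂(k) ĝ(−k)`. -/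
theorem parseval_type_equality (f : ℝ → ℂ) (g : ℝ → ℝ)
    (hfper : Function.Periodic f (2 * π))
    (hfint : IntervalIntegrable f volume (-π) π)
    (hgper : Function.Periodic g (2 * π))
    (hgbv : periodVariation g ≠ ⊤) :
    Tendsto (fun n : ℕ =>
        (1 / (2 * (π : ℂ))) * ∑ k ∈ Finset.Icc (-(n : ℤ)) (n : ℤ),
          ((1 - |(k : ℝ)| / ((n : ℝ) + 1) : ℝ) : ℂ) *
            (∫ t in (-π)..π, f t * Complex.exp (-Complex.I * (k : ℂ) * (t : ℂ))) *
            (∫ t in (-π)..π, (g t : ℂ) * Complex.exp (-Complex.I * ((-k : ℤ) : ℂ) * (t : ℂ))))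
      atTop (nhds (∫ t in (-π)..π, f t * (g t : ℂ))) :=
  parseval_type_equality_general f g hfint hgper hgbv
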